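/- Trajectories driven by the LeVeque reversible-vortex velocity field return to their initial position after one period: if x : [0,T] → ℝ² is (the unique) solution of the ordinary differential equation x'(t) = u(t, x(t)) with initial value x(0) = x₀, then x(T) = x₀. (This follows from the antisymmetry u(T - t, p) = -u(t, p), which implies that t ↦ x(T - t) solves the same ODE and agrees with x at t = T/2, together with uniqueness of solutions, which holds since u is Lipschitz in the spatial variable uniformly in time.) -/

import Mathlib

open Real
open NNReal

/-- The LeVeque reversible-vortex velocity field `u : ℝ × ℝ² → ℝ²`. -/
noncomputable def vortexField (ψ T : ℝ) (t : ℝ) (p : ℝ × ℝ) : ℝ × ℝ :=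
  (-2 * Real.sin (ψ * π * p.1) ^ 2 * Real.sin (ψ * π * p.2) * Real.cos (ψ * π * p.2) *
      Real.cos (π * t / T),
    2 * Real.sin (ψ * π * p.2) ^ 2 * Real.sin (ψ * π * p.1) * Real.cos (ψ * π * p.1) *
      Real.cos (π * t / T))

lemma my_lip_sin : LipschitzWith 1 Real.sin := by
  apply LipschitzWith.of_dist_le_mul
  intro a b
  rw [Real.dist_eq, Real.dist_eq, Real.sin_sub_sin]
  push_cast
  rw [one_mul]
  calc |2 * Real.sin ((a - b) / 2) * Real.cos ((a + b) / 2)|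
      = 2 * |Real.sin ((a - b) / 2)| * |Real.cos ((a + b) / 2)| := by
        rw [abs_mul, abs_mul]; norm_num
    _ ≤ 2 * |(a - b) / 2| * 1 := by
        apply mul_le_mul _ (Real.abs_cos_le_one _) (abs_nonneg _) (by positivity)
        exact mul_le_mul_of_nonneg_left (Real.abs_sin_le_abs) (by norm_num)
    _ = |a - b| := by rw [abs_div, abs_two]; ring

lemma my_lip_cos : LipschitzWith 1 Real.cos := by
  apply LipschitzWith.of_dist_le_mul
  intro a b
  rw [Real.dist_eq, Real.dist_eq, Real.cos_sub_cos]
  push_cast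
  rw [one_mul]
  calc |-2 * Real.sin ((a + b) / 2) * Real.sin ((a - b) / 2)|
      = 2 * |Real.sin ((a + b) / 2)| * |Real.sin ((a - b) / 2)| := by
        rw [abs_mul, abs_mul]; norm_num
    _ ≤ 2 * 1 * |(a - b) / 2| := by
        apply mul_le_mul _ (Real.abs_sin_le_abs) (abs_nonneg _) (by positivity)
        exact mul_le_mul_of_nonneg_left (Real.abs_sin_le_one _) (by norm_num)
    _ = |a - b| := by rw [abs_div, abs_two]; ring

/-- product of bounded Lipschitz real functions is Lipschitz -/
lemma my_lip_mul {X : Type*} [PseudoMetricSpace X] {f g : X → ℝ} {Kf Kg A B : ℝ≥0}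
    (hf : LipschitzWith Kf f) (hg : LipschitzWith Kg g)
    (hA : ∀ x, |f x| ≤ (A : ℝ)) (hB : ∀ x, |g x| ≤ (B : ℝ)) :
    LipschitzWith (A * Kg + B * Kf) (fun x => f x * g x) := by
  apply LipschitzWith.of_dist_le_mul
  intro x y
  have hfd := hf.dist_le_mul x y
  have hgd := hg.dist_le_mul x y
  simp only [Real.dist_eq] at hfd hgd ⊢
  have key : f x * g x - f y * g y = f x * (g x - g y) + (f x - f y) * g y := by ring
  rw [key]
  push_cast
  calc |f x * (g x - g y) + (f x - f y) * g y|
      ≤ |f x * (g x - g y)| + |(f x - f y) * g y| := abs_add_le _ _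
    _ = |f x| * |g x - g y| + |f x - f y| * |g y| := by rw [abs_mul, abs_mul]
    _ ≤ (A : ℝ) * ((Kg : ℝ) * dist x y) + ((Kf : ℝ) * dist x y) * (B : ℝ) := by
        apply add_le_add
        · exact mul_le_mul (hA x) hgd (abs_nonneg _) A.coe_nonneg
        · exact mul_le_mul hfd (hB y) (abs_nonneg _) (by positivity)
    _ = ((A : ℝ) * Kg + (B : ℝ) * Kf) * dist x y := by ring

lemma my_bound_mul {X : Type*} {f g : X → ℝ} {A B : ℝ≥0}
    (hA : ∀ x, |f x| ≤ (A : ℝ)) (hB : ∀ x, |g x| ≤ (B : ℝ)) :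
    ∀ x, |f x * g x| ≤ ((A * B : ℝ≥0) : ℝ) := by
  intro x
  push_cast
  rw [abs_mul]
  exact mul_le_mul (hA x) (hB x) (abs_nonneg _) A.coe_nonneg

lemma vortex_lipschitz (ψ T : ℝ) :
    ∃ K : ℝ≥0, ∀ t, LipschitzWith K (vortexField ψ T t) := by
  set k : ℝ≥0 := ‖ψ * π‖₊ with hk
  have hl1 : LipschitzWith k (fun p : ℝ × ℝ => ψ * π * p.1) := by
    apply LipschitzWith.of_dist_le_mul
    intro p q
    rw [Real.dist_eq, ← mul_sub, abs_mul]
    have h1 : |p.1 - q.1| ≤ dist p q := by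
      rw [← Real.dist_eq]; exact (le_max_left _ _).trans_eq Prod.dist_eq.symm
    calc |ψ * π| * |p.1 - q.1| ≤ |ψ * π| * dist p q :=
          mul_le_mul_of_nonneg_left h1 (abs_nonneg _)
      _ = (k : ℝ) * dist p q := by rw [hk, coe_nnnorm, Real.norm_eq_abs]
  have hl2 : LipschitzWith k (fun p : ℝ × ℝ => ψ * π * p.2) := by
    apply LipschitzWith.of_dist_le_mul
    intro p q
    rw [Real.dist_eq, ← mul_sub, abs_mul]
    have h1 : |p.2 - q.2| ≤ dist p q := by
      rw [← Real.dist_eq]; exact (le_max_right _ _).trans_eq Prod.dist_eq.symm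
    calc |ψ * π| * |p.2 - q.2| ≤ |ψ * π| * dist p q :=
          mul_le_mul_of_nonneg_left h1 (abs_nonneg _)
      _ = (k : ℝ) * dist p q := by rw [hk, coe_nnnorm, Real.norm_eq_abs]
  have hs1 := my_lip_sin.comp hl1
  have hc1 := my_lip_cos.comp hl1
  have hs2 := my_lip_sin.comp hl2
  have hc2 := my_lip_cos.comp hl2
  have bs1 : ∀ p : ℝ × ℝ, |(Real.sin ∘ fun p : ℝ × ℝ => ψ * π * p.1) p| ≤ ((1 : ℝ≥0) : ℝ) :=
    fun p => by simpa using Real.abs_sin_le_one _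
  have bc1 : ∀ p : ℝ × ℝ, |(Real.cos ∘ fun p : ℝ × ℝ => ψ * π * p.1) p| ≤ ((1 : ℝ≥0) : ℝ) :=
    fun p => by simpa using Real.abs_cos_le_one _
  have bs2 : ∀ p : ℝ × ℝ, |(Real.sin ∘ fun p : ℝ × ℝ => ψ * π * p.2) p| ≤ ((1 : ℝ≥0) : ℝ) :=
    fun p => by simpa using Real.abs_sin_le_one _
  have bc2 : ∀ p : ℝ × ℝ, |(Real.cos ∘ fun p : ℝ × ℝ => ψ * π * p.2) p| ≤ ((1 : ℝ≥0) : ℝ) :=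
    fun p => by simpa using Real.abs_cos_le_one _
  -- first component without the time factor
  have hq1 := my_lip_mul hs1 hs1 bs1 bs1
  have bq1 := my_bound_mul bs1 bs1
  have hn2 : LipschitzWith 0 (fun _ : ℝ × ℝ => (-2 : ℝ)) := LipschitzWith.const _
  have bn2 : ∀ p : ℝ × ℝ, |(fun _ : ℝ × ℝ => (-2 : ℝ)) p| ≤ ((2 : ℝ≥0) : ℝ) := by
    intro p; norm_num
  have h11 := my_lip_mul hn2 hq1 bn2 bq1
  have b11 := my_bound_mul bn2 bq1
  have h12 := my_lip_mul h11 hs2 b11 bs2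
  have b12 := my_bound_mul b11 bs2
  have h13 := my_lip_mul h12 hc2 b12 bc2
  have b13 := my_bound_mul b12 bc2
  -- second component without the time factor
  have hq2 := my_lip_mul hs2 hs2 bs2 bs2
  have bq2 := my_bound_mul bs2 bs2
  have hp2 : LipschitzWith 0 (fun _ : ℝ × ℝ => (2 : ℝ)) := LipschitzWith.const _
  have bp2 : ∀ p : ℝ × ℝ, |(fun _ : ℝ × ℝ => (2 : ℝ)) p| ≤ ((2 : ℝ≥0) : ℝ) := by
    intro p; norm_num
  have h21 := my_lip_mul hp2 hq2 bp2 bq2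
  have b21 := my_bound_mul bp2 bq2
  have h22 := my_lip_mul h21 hs1 b21 bs1
  have b22 := my_bound_mul b21 bs1
  have h23 := my_lip_mul h22 hc1 b22 bc1
  have b23 := my_bound_mul b22 bc1
  refine ⟨8 * k, fun t => ?_⟩
  have hct : LipschitzWith 0 (fun _ : ℝ × ℝ => Real.cos (π * t / T)) := LipschitzWith.const _
  have bct : ∀ p : ℝ × ℝ, |(fun _ : ℝ × ℝ => Real.cos (π * t / T)) p| ≤ ((1 : ℝ≥0) : ℝ) :=
    fun p => by simpa using Real.abs_cos_le_one _
  have h1f := my_lip_mul h13 hct b13 bct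
  have h2f := my_lip_mul h23 hct b23 bct
  have hprod := h1f.prodMk h2f
  have heq : vortexField ψ T t = fun p : ℝ × ℝ =>
      ((fun p : ℝ × ℝ => ((fun _ : ℝ × ℝ => (-2:ℝ)) p *
          ((Real.sin ∘ fun p : ℝ × ℝ => ψ * π * p.1) p *
           (Real.sin ∘ fun p : ℝ × ℝ => ψ * π * p.1) p) *
          (Real.sin ∘ fun p : ℝ × ℝ => ψ * π * p.2) p *
          (Real.cos ∘ fun p : ℝ × ℝ => ψ * π * p.2) p)) p * Real.cos (π * t / T),
       (fun p : ℝ × ℝ => ((fun _ : ℝ × ℝ => (2:ℝ)) p *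
          ((Real.sin ∘ fun p : ℝ × ℝ => ψ * π * p.2) p *
           (Real.sin ∘ fun p : ℝ × ℝ => ψ * π * p.2) p) *
          (Real.sin ∘ fun p : ℝ × ℝ => ψ * π * p.1) p *
          (Real.cos ∘ fun p : ℝ × ℝ => ψ * π * p.1) p)) p * Real.cos (π * t / T)) := by
    funext p
    simp only [vortexField, Function.comp_apply, Prod.mk.injEq]
    constructor <;> ring
  rw [heq]
  exact hprod.weaken (max_le (le_of_eq (by ring)) (le_of_eq (by ring)))

/-- trajectories driven by the LeVeque reversible-vortex velocity field
return to their initial position after one period: if `x` solves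
`x'(t) = u(t, x(t))` on `[0, T]` with `x 0 = x₀`, then `x T = x₀`. -/
theorem vortex_trajectory_periodic (ψ T : ℝ) (hψ : 0 < ψ) (hT : 0 < T)
    (x : ℝ → ℝ × ℝ) (x₀ : ℝ × ℝ)
    (hode : ∀ t ∈ Set.Icc (0 : ℝ) T, HasDerivAt x (vortexField ψ T t (x t)) t)
    (hinit : x 0 = x₀) :
    x T = x₀ := by
  obtain ⟨K, hK⟩ := vortex_lipschitz ψ T
  set y : ℝ → ℝ × ℝ := fun s => x (T - s) with hy
  have hanti : ∀ (s : ℝ) (p : ℝ × ℝ), vortexField ψ T (T - s) p = -vortexField ψ T s p := by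
    intro s p
    have harg : π * (T - s) / T = π - π * s / T := by
      field_simp
    simp only [vortexField, harg, Real.cos_pi_sub, Prod.neg_mk, Prod.mk.injEq]
    constructor <;> ring
  have hody : ∀ s ∈ Set.Icc (0 : ℝ) T, HasDerivAt y (vortexField ψ T s (y s)) s := by
    intro s hs
    have hs' : T - s ∈ Set.Icc (0 : ℝ) T := ⟨by linarith [hs.2], by linarith [hs.1]⟩
    have hx := hode (T - s) hs'
    have hneg : HasDerivAt (fun r : ℝ => T - r) (-1) s := (hasDerivAt_id s).const_sub T
    have hcomp := HasDerivAt.scomp s hx hneg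
    convert hcomp using 1
    · rfl
    · rfl
    · rfl
    · rfl
    rw [hanti]
    simp
    rfl
  have hmidy : x (T / 2) = y (T / 2) := by
    have : T - T / 2 = T / 2 := by ring
    simp [hy, this]
  have hsub : Set.Icc (T / 2) T ⊆ Set.Icc 0 T := Set.Icc_subset_Icc (by linarith) le_rfl
  have hxc : ContinuousOn x (Set.Icc (T / 2) T) :=
    fun s hs => ((hode s (hsub hs)).continuousAt).continuousWithinAt
  have hyc : ContinuousOn y (Set.Icc (T / 2) T) :=
    fun s hs => ((hody s (hsub hs)).continuousAt).continuousWithinAt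
  have hx' : ∀ s ∈ Set.Ico (T / 2) T,
      HasDerivWithinAt x (vortexField ψ T s (x s)) (Set.Ici s) s :=
    fun s hs => (hode s (hsub (Set.Ico_subset_Icc_self hs))).hasDerivWithinAt
  have hy' : ∀ s ∈ Set.Ico (T / 2) T,
      HasDerivWithinAt y (vortexField ψ T s (y s)) (Set.Ici s) s :=
    fun s hs => (hody s (hsub (Set.Ico_subset_Icc_self hs))).hasDerivWithinAt
  have huniq := ODE_solution_unique hK hxc hx' hyc hy' hmidy
  have hTmem : T ∈ Set.Icc (T / 2) T := ⟨by linarith, le_rfl⟩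
  have hxy := huniq hTmem
  rw [hxy]
  simp [hy, hinit]
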